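/- Let τ > 0, C > 0, H > 0 and M, N ≥ 1. The minimum over real pairs (n, m) with 0 ≤ n ≤ N and 0 ≤ m ≤ M of the social cost S(n, m) = C·(N − n + M − m) + H·( n·v_𝒩(n,m) + m·v_ℳ(n,m) ) equals max{τ²MN − 1, 0} · min{ C/(τ²·max{M, N}), H·(τ(M+N) + 2)/(τ·(τM+1)·(τN+1)) }. In particular: if MN ≤ 1/τ² the minimum is 0, attained at (n, m) = (N, M); if MN > 1/τ² and τ·max{M,N}·(τ(M+N)+2)/((τM+1)(τN+1)) ≥ C/H the minimum is C·(τ²MN − 1)/(τ²·max{M, N}), attained at (1/(τ²M), M) when M > N and at (N, 1/(τ²N)) when M < N; otherwise the minimum is H·(τ²MN − 1)·(τ(M+N)+2)/(τ·(τM+1)·(τN+1)), attained at (N, M). -/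

import Mathlib

/-!
Write `k(n, m) = max (τ²mn − 1) 0` and `w(a, b) = 1/(τ(τa+1)) + 1/(τ(τb+1))`. The infected mass
`n·v_𝒩 + m·v_ℳ` equals `k(n, m)·w(m, n)`, so `S(n, m) = C(N − n + M − m) + H·k(n, m)·w(m, n)`.
Splitting `k(N, M) = (k(N, M) − k(n, m)) + k(n, m)`, the first part is paid for by investment:
`τ²(MN − mn) ≤ τ²·max M N·(N − n + M − m)`, and the second by infection, since `w` is antitone.
Hence `S ≥ k(N, M)·min (C/(τ²·max M N)) (H·w(M, N))`. The bound is attained at `(N, M)` (all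
infection cost) or on the threshold curve `τ²mn = 1`, reached by immunizing only nodes of the
smaller cluster (all investment cost).
-/

namespace BipartiteSIS

noncomputable def infectionWeight (τ a b : ℝ) : ℝ :=
  (τ * (a + b) + 2) / (τ * (τ * a + 1) * (τ * b + 1))

section Weight

variable {τ a b : ℝ}

lemma infectionWeight_eq_add (hτ : 0 < τ) (ha : 0 ≤ a) (hb : 0 ≤ b) :
    infectionWeight τ a b = 1 / (τ * (τ * a + 1)) + 1 / (τ * (τ * b + 1)) := by
  have : 0 < τ * a + 1 := by positivity
  have : 0 < τ * b + 1 := by positivity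
  unfold infectionWeight
  field_simp
  ring

lemma infectionWeight_antitone (hτ : 0 < τ) (ha : 0 ≤ a) (hb : 0 ≤ b) {a' b' : ℝ}
    (haa' : a ≤ a') (hbb' : b ≤ b') : infectionWeight τ a' b' ≤ infectionWeight τ a b := by
  rw [infectionWeight_eq_add hτ ha hb, infectionWeight_eq_add hτ (ha.trans haa') (hb.trans hbb')]
  gcongr

lemma infectedMass_eq (hτ : 0 < τ) {n m : ℝ} (hn : 0 ≤ n) (hm : 0 ≤ m) :
    n * (if 1 < τ ^ 2 * m * n then (τ ^ 2 * m * n - 1) / (τ * n * (τ * m + 1)) else 0) +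
      m * (if 1 < τ ^ 2 * m * n then (τ ^ 2 * m * n - 1) / (τ * m * (τ * n + 1)) else 0) =
      max (τ ^ 2 * m * n - 1) 0 * infectionWeight τ m n := by
  split_ifs with h
  · have hmn : m * n ≠ 0 := by rintro hmn; rw [mul_assoc, hmn] at h; norm_num at h
    obtain ⟨hm0, hn0⟩ := mul_ne_zero_iff.mp hmn
    have : 0 < τ * m + 1 := by positivity
    have : 0 < τ * n + 1 := by positivity
    rw [max_eq_left (by linarith), infectionWeight]
    field_simp
    ring
  · simp [max_eq_right (not_lt.mp h |> sub_nonpos.mpr)]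

end Weight

noncomputable def socialCost (τ C H M N n m : ℝ) : ℝ :=
  C * (N - n + M - m) + H * (max (τ ^ 2 * m * n - 1) 0 * infectionWeight τ m n)

lemma mul_sub_mul_le_max_mul {M N m n : ℝ} (hm : m ≤ M) (hn : n ≤ N) :
    M * N - m * n ≤ max M N * (N - n + M - m) := by
  rcases le_total N M with h | h
  · rw [max_eq_left h]
    nlinarith
  · rw [max_eq_right h]
    nlinarith

lemma min_mul_add_le {a b x y : ℝ} (hx : 0 ≤ x) (hy : 0 ≤ y) :
    min a b * (x + y) ≤ a * x + b * y := by
  rw [mul_add]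
  exact add_le_add (mul_le_mul_of_nonneg_right (min_le_left a b) hx)
    (mul_le_mul_of_nonneg_right (min_le_right a b) hy)

section Cost

variable {τ C H M N : ℝ}

lemma div_mul_le_investment (hτ : 0 < τ) (hC : 0 ≤ C) (hM : 0 < M) {m n : ℝ} (hm : m ≤ M)
    (hn : n ≤ N) : C / (τ ^ 2 * max M N) * (τ ^ 2 * (M * N - m * n)) ≤ C * (N - n + M - m) := by
  have hX : 0 < max M N := lt_max_of_lt_left hM
  calc C / (τ ^ 2 * max M N) * (τ ^ 2 * (M * N - m * n))
      ≤ C / (τ ^ 2 * max M N) * (τ ^ 2 * (max M N * (N - n + M - m))) := by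
        gcongr
        exact mul_sub_mul_le_max_mul hm hn
    _ = C * (N - n + M - m) := by field_simp

lemma le_socialCost (hτ : 0 < τ) (hC : 0 ≤ C) (hH : 0 ≤ H) (hM : 0 < M) {n m : ℝ}
    (hn : 0 ≤ n) (hnN : n ≤ N) (hm : 0 ≤ m) (hmM : m ≤ M) :
    max (τ ^ 2 * M * N - 1) 0 * min (C / (τ ^ 2 * max M N)) (H * infectionWeight τ M N) ≤
      socialCost τ C H M N n m := by
  set K := max (τ ^ 2 * M * N - 1) 0
  set k := max (τ ^ 2 * m * n - 1) 0
  have hmn : m * n ≤ M * N := mul_le_mul hmM hnN hn hM.le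
  have hkK : k ≤ K := max_le_max_right 0 (by nlinarith)
  have hKk : K - k ≤ τ ^ 2 * (M * N - m * n) := by
    refine (max_sub_max_le_max _ _ _ _).trans (max_le (by linarith) ?_)
    nlinarith
  calc K * min (C / (τ ^ 2 * max M N)) (H * infectionWeight τ M N)
      = min (C / (τ ^ 2 * max M N)) (H * infectionWeight τ M N) * ((K - k) + k) := by ring
    _ ≤ C / (τ ^ 2 * max M N) * (K - k) + H * infectionWeight τ M N * k :=
        min_mul_add_le (by linarith) (le_max_right _ _)
    _ ≤ C / (τ ^ 2 * max M N) * (τ ^ 2 * (M * N - m * n)) + H * (k * infectionWeight τ m n) := by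
        refine add_le_add (by gcongr) ?_
        rw [mul_comm k, ← mul_assoc]
        gcongr
        exact infectionWeight_antitone hτ hm hn hmM hnN
    _ ≤ socialCost τ C H M N n m :=
        add_le_add_left (div_mul_le_investment hτ hC hM hmM hnN) _

lemma socialCost_self :
    socialCost τ C H M N N M = max (τ ^ 2 * M * N - 1) 0 * (H * infectionWeight τ M N) := by
  simp only [socialCost]
  ring

lemma socialCost_of_threshold {n m : ℝ} (h : τ ^ 2 * m * n = 1) :
    socialCost τ C H M N n m = C * (N - n + M - m) := by
  simp [socialCost, h]

lemma socialCost_threshold_left (hτ : 0 < τ) (hM : 0 < M) :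
    socialCost τ C H M N (1 / (τ ^ 2 * M)) M = (τ ^ 2 * M * N - 1) * (C / (τ ^ 2 * M)) := by
  rw [socialCost_of_threshold (by field_simp)]
  field_simp
  ring

lemma socialCost_threshold_right (hτ : 0 < τ) (hN : 0 < N) :
    socialCost τ C H M N N (1 / (τ ^ 2 * N)) = (τ ^ 2 * M * N - 1) * (C / (τ ^ 2 * N)) := by
  rw [socialCost_of_threshold (by field_simp)]
  field_simp
  ring

lemma exists_socialCost_eq (hτ : 0 < τ) (hM : 0 < M) (hN : 0 < N) :
    ∃ n m, 0 ≤ n ∧ n ≤ N ∧ 0 ≤ m ∧ m ≤ M ∧ socialCost τ C H M N n m =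
      max (τ ^ 2 * M * N - 1) 0 * min (C / (τ ^ 2 * max M N)) (H * infectionWeight τ M N) := by
  have hcorner : ∀ v, socialCost τ C H M N N M = v → ∃ n m, 0 ≤ n ∧ n ≤ N ∧ 0 ≤ m ∧ m ≤ M ∧
      socialCost τ C H M N n m = v := fun v hv => ⟨N, M, hN.le, le_rfl, hM.le, le_rfl, hv⟩
  rcases le_or_gt (τ ^ 2 * M * N - 1) 0 with hK | hK
  · exact hcorner _ (by rw [socialCost_self, max_eq_right hK, zero_mul, zero_mul])
  rcases le_total (H * infectionWeight τ M N) (C / (τ ^ 2 * max M N)) with hBA | hAB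
  · exact hcorner _ (by rw [socialCost_self, min_eq_right hBA])
  rw [max_eq_left hK.le, min_eq_left hAB]
  rcases le_total N M with hNM | hMN
  · refine ⟨1 / (τ ^ 2 * M), M, by positivity, ?_, hM.le, le_rfl, ?_⟩
    · rw [div_le_iff₀ (by positivity)]
      linarith
    · rw [socialCost_threshold_left hτ hM, max_eq_left hNM]
  · refine ⟨N, 1 / (τ ^ 2 * N), hN.le, le_rfl, by positivity, ?_, ?_⟩
    · rw [div_le_iff₀ (by positivity)]
      linarith
    · rw [socialCost_threshold_right hτ hN, max_eq_right hMN]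

theorem isLeast_socialCost (hτ : 0 < τ) (hC : 0 ≤ C) (hH : 0 ≤ H) (hM : 0 < M) (hN : 0 < N) :
    IsLeast {s | ∃ n m, 0 ≤ n ∧ n ≤ N ∧ 0 ≤ m ∧ m ≤ M ∧ socialCost τ C H M N n m = s}
      (max (τ ^ 2 * M * N - 1) 0 * min (C / (τ ^ 2 * max M N)) (H * infectionWeight τ M N)) := by
  refine ⟨exists_socialCost_eq hτ hM hN, ?_⟩
  rintro s ⟨n, m, hn, hnN, hm, hmM, rfl⟩
  exact le_socialCost hτ hC hH hM hn hnN hm hmM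

lemma div_le_iff_le_mul_infectionWeight (hτ : 0 < τ) (hH : 0 < H) (hM : 0 ≤ M) (hN : 0 ≤ N)
    {X : ℝ} (hX : 0 < X) :
    C / H ≤ τ * X * (τ * (M + N) + 2) / ((τ * M + 1) * (τ * N + 1)) ↔
      C / (τ ^ 2 * X) ≤ H * infectionWeight τ M N := by
  have : 0 < τ * M + 1 := by positivity
  have : 0 < τ * N + 1 := by positivity
  have hw : τ * X * (τ * (M + N) + 2) / ((τ * M + 1) * (τ * N + 1)) =
      τ ^ 2 * X * infectionWeight τ M N := by
    unfold infectionWeight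
    field_simp
  rw [hw, div_le_iff₀ hH, div_le_iff₀ (by positivity)]
  constructor <;> intro h <;> linarith

end Cost

end BipartiteSIS

open BipartiteSIS

/-- the minimum of the bipartite social cost over real pairs
(n, m) ∈ [0,N]×[0,M] equals
max{τ²MN − 1, 0}·min{C/(τ²·max{M,N}), H(τ(M+N)+2)/(τ(τM+1)(τN+1))},
with the stated attainment points in each case. -/
theorem stmt_13 (τ C H : ℝ) (hτ : 0 < τ) (hC : 0 < C) (hH : 0 < H)
    (M N : ℝ) (hM : 1 ≤ M) (hN : 1 ≤ N)
    (vM vN : ℝ → ℝ → ℝ)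
    (hvM : ∀ n m : ℝ, vM n m = if 1 < τ ^ 2 * m * n
      then (τ ^ 2 * m * n - 1) / (τ * m * (τ * n + 1)) else 0)
    (hvN : ∀ n m : ℝ, vN n m = if 1 < τ ^ 2 * m * n
      then (τ ^ 2 * m * n - 1) / (τ * n * (τ * m + 1)) else 0)
    (S : ℝ → ℝ → ℝ)
    (hS : ∀ n m : ℝ, S n m = C * (N - n + M - m) + H * (n * vN n m + m * vM n m))
    (Smin : ℝ)
    (hSmin : Smin = max (τ ^ 2 * M * N - 1) 0 *
      min (C / (τ ^ 2 * max M N)) (H * (τ * (M + N) + 2) / (τ * (τ * M + 1) * (τ * N + 1)))) :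
    IsLeast {s : ℝ | ∃ n m : ℝ, 0 ≤ n ∧ n ≤ N ∧ 0 ≤ m ∧ m ≤ M ∧ S n m = s} Smin ∧
    (M * N ≤ 1 / τ ^ 2 → Smin = 0 ∧ S N M = Smin) ∧
    (1 / τ ^ 2 < M * N →
      C / H ≤ τ * max M N * (τ * (M + N) + 2) / ((τ * M + 1) * (τ * N + 1)) →
      Smin = C * (τ ^ 2 * M * N - 1) / (τ ^ 2 * max M N) ∧
      (N < M → S (1 / (τ ^ 2 * M)) M = Smin) ∧
      (M < N → S N (1 / (τ ^ 2 * N)) = Smin)) ∧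
    (1 / τ ^ 2 < M * N →
      τ * max M N * (τ * (M + N) + 2) / ((τ * M + 1) * (τ * N + 1)) < C / H →
      Smin = H * (τ ^ 2 * M * N - 1) * (τ * (M + N) + 2) / (τ * (τ * M + 1) * (τ * N + 1)) ∧
      S N M = Smin) := by
  have hM0 : 0 < M := by linarith
  have hN0 : 0 < N := by linarith
  have hcost : ∀ n m, 0 ≤ n → 0 ≤ m → S n m = socialCost τ C H M N n m := fun n m hn hm => by
    rw [hS, hvN, hvM, infectedMass_eq hτ hn hm, socialCost]
  have hB : H * (τ * (M + N) + 2) / (τ * (τ * M + 1) * (τ * N + 1)) =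
      H * infectionWeight τ M N := mul_div_assoc _ _ _
  subst hSmin
  rw [hB]
  have hK : 1 / τ ^ 2 < M * N ↔ 0 < τ ^ 2 * M * N - 1 := by
    rw [div_lt_iff₀ (by positivity)]
    constructor <;> intro h <;> linarith
  have hAB := div_le_iff_le_mul_infectionWeight (C := C) hτ hH hM0.le hN0.le
    (lt_max_of_lt_left hM0 : 0 < max M N)
  have hSNM : S N M = max (τ ^ 2 * M * N - 1) 0 * (H * infectionWeight τ M N) := by
    rw [hcost N M hN0.le hM0.le, socialCost_self]
  refine ⟨?_, fun h => ?_, fun h hCH => ?_, fun h hCH => ?_⟩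
  · convert isLeast_socialCost hτ hC.le hH.le hM0 hN0 using 3 with s
    refine exists₂_congr fun n m => ⟨?_, ?_⟩ <;> rintro ⟨hn, hnN, hm, hmM, rfl⟩ <;>
      exact ⟨hn, hnN, hm, hmM, by rw [hcost n m hn hm]⟩
  · have hK0 : τ ^ 2 * M * N - 1 ≤ 0 := not_lt.mp (mt hK.mpr (not_lt.mpr h))
    simp only [hSNM, max_eq_right hK0, zero_mul, and_self]
  · rw [max_eq_left (hK.mp h).le, min_eq_left (hAB.mp hCH)]
    refine ⟨by ring, fun hNM => ?_, fun hMN => ?_⟩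
    · rw [hcost _ _ (by positivity) hM0.le, socialCost_threshold_left hτ hM0, max_eq_left hNM.le]
    · rw [hcost _ _ hN0.le (by positivity), socialCost_threshold_right hτ hN0, max_eq_right hMN.le]
  · have hBA : H * infectionWeight τ M N ≤ C / (τ ^ 2 * max M N) :=
      le_of_not_ge (mt hAB.mpr (not_le.mpr hCH))
    rw [hSNM, max_eq_left (hK.mp h).le, min_eq_right hBA, infectionWeight]
    exact ⟨by ring, rfl⟩
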